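/- arXiv:2311.09019 — 3 statements merged into one kernel-verified Lean document; each statement's English description precedes it below -/
import Mathlib

section
/- Let R be a ring and G, K ∈ R with 1 - G*K invertible. Define W = (1-G*K)⁻¹, X = (1-G*K)⁻¹*G, Y = (1-K*G)⁻¹*K, Z = (1-K*G)⁻¹. Then W - G*Y = 1 and X - G*Z = 0, i.e. the first affine constraint [1, -G]·[[W,X],[Y,Z]] = [1, 0] holds. -/
lemma isUnit_one_sub_swap {R : Type*} [Ring R] (x y : R) (h : IsUnit (1 - x * y)) :
    IsUnit (1 - y * x) := by
  refine ⟨⟨1 - y * x, 1 + y * h.unit.inv * x, ?_, ?_⟩, rfl⟩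
  · calc
      (1 - y * x) * (1 + y * (IsUnit.unit h).inv * x) =
          1 - y * x + y * ((1 - x * y) * h.unit.inv) * x := by noncomm_ring
      _ = 1 := by simp only [Units.inv_eq_val_inv, IsUnit.mul_val_inv, mul_one, sub_add_cancel]
  · calc
      (1 + y * (IsUnit.unit h).inv * x) * (1 - y * x) =
          1 - y * x + y * (h.unit.inv * (1 - x * y)) * x := by noncomm_ring
      _ = 1 := by simp only [Units.inv_eq_val_inv, IsUnit.val_inv_mul, mul_one, sub_add_cancel]

theorem iop_affine_first {R : Type*} [Ring R] (G K : R) (h : IsUnit (1 - G * K))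
    (W X Y Z : R)
    (hW : W = Ring.inverse (1 - G * K)) (hX : X = Ring.inverse (1 - G * K) * G)
    (hY : Y = Ring.inverse (1 - K * G) * K) (hZ : Z = Ring.inverse (1 - K * G)) :
    W - G * Y = 1 ∧ X - G * Z = 0 := by
  have h' : IsUnit (1 - K * G) := isUnit_one_sub_swap G K h
  set u := Ring.inverse (1 - G * K) with hu
  set v := Ring.inverse (1 - K * G) with hv
  have hu1 : u * (1 - G * K) = 1 := Ring.inverse_mul_cancel _ h
  have hu2 : (1 - G * K) * u = 1 := Ring.mul_inverse_cancel _ h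
  have hv1 : v * (1 - K * G) = 1 := Ring.inverse_mul_cancel _ h'
  have hv2 : (1 - K * G) * v = 1 := Ring.mul_inverse_cancel _ h'
  have key : G * v = u * G := by
    calc G * v = (u * (1 - G * K)) * G * v := by rw [hu1, one_mul]
    _ = u * (G * (1 - K * G)) * v := by noncomm_ring
    _ = u * G * ((1 - K * G) * v) := by noncomm_ring
    _ = u * G := by rw [hv2, mul_one]
  constructor
  · have : W - G * Y = u - (G * v) * K := by rw [hW, hY]; noncomm_ring
    rw [this, key]
    calc u - u * G * K = u * (1 - G * K) := by noncomm_ring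
    _ = 1 := hu1
  · rw [hX, hZ, ← key, sub_self]
end

section
/- Let R be a ring and G, W, X, Y, Z ∈ R satisfying W - G*Y = 1, X - G*Z = 0, W*G = X, Y*G + 1 = Z, with W invertible. Set K := Y*W⁻¹. Then (1-G*K)⁻¹ = W, (1-G*K)⁻¹*G = X, (1-K*G)⁻¹*K = Y, and (1-K*G)⁻¹ = Z. -/
theorem iop_converse_full {R : Type*} [Ring R] (G W X Y Z K : R)
    (h1 : W - G * Y = 1) (h2 : X - G * Z = 0) (h3 : W * G = X) (h4 : Y * G + 1 = Z)
    (hW : IsUnit W) (hK : K = Y * Ring.inverse W) :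
    Ring.inverse (1 - G * K) = W ∧ Ring.inverse (1 - G * K) * G = X ∧
    Ring.inverse (1 - K * G) * K = Y ∧ Ring.inverse (1 - K * G) = Z := by
  obtain ⟨u, rfl⟩ := hW
  have hinv : Ring.inverse (u : R) = ↑u⁻¹ := Ring.inverse_unit u
  have hGZ : G * Z = X := (sub_eq_zero.mp h2).symm
  have hGK : (1 : R) - G * K = ↑u⁻¹ := by
    calc (1 : R) - G * K = 1 - (G * Y) * ↑u⁻¹ := by rw [hK, hinv, mul_assoc]
      _ = (u : R) * ↑u⁻¹ - (G * Y) * ↑u⁻¹ := by rw [Units.mul_inv]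
      _ = ((u : R) - G * Y) * ↑u⁻¹ := by rw [sub_mul]
      _ = 1 * ↑u⁻¹ := by rw [h1]
      _ = ↑u⁻¹ := one_mul _
  have g1 : Ring.inverse (1 - G * K) = (u : R) := by
    rw [hGK, Ring.inverse_unit u⁻¹, inv_inv]
  have hKGZ : K * (G * Z) = Y * G := by
    rw [hGZ, ← h3, hK, hinv, mul_assoc, ← mul_assoc (↑u⁻¹ : R), Units.inv_mul, one_mul]
  have hZY : Z * Y = Y * (u : R) := by
    have hu : (u : R) = 1 + G * Y := by rw [← h1]; abel
    rw [← h4, hu]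
    noncomm_ring
  have pr1 : (1 - K * G) * Z = 1 := by
    have : K * G * Z = Y * G := by rw [mul_assoc]; exact hKGZ
    rw [sub_mul, one_mul, this, ← h4, add_sub_cancel_left]
  have pr2 : Z * (1 - K * G) = 1 := by
    have hZK : Z * K = Y := by
      rw [hK, hinv, ← mul_assoc, hZY, mul_assoc, Units.mul_inv, mul_one]
    rw [mul_sub, mul_one, ← mul_assoc, hZK, ← h4, add_sub_cancel_left]
  set v : Rˣ := ⟨1 - K * G, Z, pr1, pr2⟩ with hv
  have g4 : Ring.inverse (1 - K * G) = Z := by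
    have : (1 : R) - K * G = (v : R) := rfl
    rw [this, Ring.inverse_unit v]
    rfl
  refine ⟨g1, by rw [g1, h3], ?_, g4⟩
  rw [g4, hK, hinv, ← mul_assoc, hZY, mul_assoc, Units.mul_inv, mul_one]
end

section
/- Let R be a ring and K, W, X, Y, Z ∈ R satisfying Y = K*W, Z = 1 + K*X, W = 1 + X*K, Y = Z*K, with W invertible. Set G := W⁻¹*X. Then Z*(1 - K*G) = 1 and (1 - K*G)*Z = 1, so 1 - K*G is invertible with inverse Z. -/
theorem dual_iop_converse_key {R : Type*} [Ring R] (K W X Y Z G : R)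
    (h1 : Y = K * W) (h2 : Z = 1 + K * X) (h3 : W = 1 + X * K) (h4 : Y = Z * K)
    (hW : IsUnit W) (hG : G = Ring.inverse W * X) :
    Z * (1 - K * G) = 1 ∧ (1 - K * G) * Z = 1 ∧ IsUnit (1 - K * G) ∧
    Ring.inverse (1 - K * G) = Z := by
  have hWW : W * Ring.inverse W = 1 := Ring.mul_inverse_cancel W hW
  have hWW' : Ring.inverse W * W = 1 := Ring.inverse_mul_cancel W hW
  have hZK : Z * K = K * W := by rw [← h4, h1]
  have hXZ : X * Z = W * X := by rw [h2, h3]; noncomm_ring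
  have e1 : Z * (1 - K * G) = 1 := by
    have : Z * (K * (Ring.inverse W * X)) = K * X := by
      calc Z * (K * (Ring.inverse W * X)) = (Z * K) * Ring.inverse W * X := by noncomm_ring
        _ = K * (W * Ring.inverse W) * X := by rw [hZK]; noncomm_ring
        _ = K * X := by rw [hWW]; noncomm_ring
    rw [hG, mul_sub, mul_one, this, h2]; noncomm_ring
  have e2 : (1 - K * G) * Z = 1 := by
    have : K * (Ring.inverse W * X) * Z = K * X := by
      calc K * (Ring.inverse W * X) * Z = K * (Ring.inverse W * (X * Z)) := by noncomm_ring
        _ = K * (Ring.inverse W * W * X) := by rw [hXZ]; noncomm_ring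
        _ = K * X := by rw [hWW']; noncomm_ring
    rw [hG, sub_mul, one_mul, this, h2]; noncomm_ring
  have hu : IsUnit (1 - K * G) := ⟨⟨1 - K * G, Z, e2, e1⟩, rfl⟩
  refine ⟨e1, e2, hu, ?_⟩
  have h := Ring.mul_inverse_cancel _ hu
  calc Ring.inverse (1 - K * G) = 1 * Ring.inverse (1 - K * G) := by rw [one_mul]
    _ = Z * ((1 - K * G) * Ring.inverse (1 - K * G)) := by nth_rewrite 1 [← e1]; rw [mul_assoc]
    _ = Z := by rw [h, mul_one]
end
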